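/- Asymptotic factorization of ξ: the difference ξ(√(x·(x + 1/2))) − √(ξ(x)·ξ(x + 1/2)) is O(x⁻³) as x → ∞; explicitly, the function x ↦ √(x² + x/2 + 1/16) − ((x² + 1/16)·((x + 1/2)² + 1/16))^(1/4) is big-O of x ↦ x⁻³ along the filter atTop on ℝ. -/

import Mathlib

/-- ξ(y) = √(y² + 1/16). -/
noncomputable def xi (y : ℝ) : ℝ := Real.sqrt (y ^ 2 + 1 / 16)

/-!
With `A = x² + x/2 + 1/16` one has `ξ(√(x(x + 1/2))) = √A` and `ξ(x) ξ(x + 1/2) = √(A² + 1/64)`,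
so the difference is `√A - (A² + 1/64)^(1/4)`. Two applications of `√b - √a ≤ (b - a) / (2√a)`
bound it by `(1/64) / (4 A √A)`, and `A ≥ x²` makes this `O(x⁻³)`.
-/

open Real Filter Asymptotics

lemma sqrt_sub_sqrt_le_div {a b : ℝ} (ha : 0 < a) (hab : a ≤ b) :
    √b - √a ≤ (b - a) / (2 * √a) := by
  have hsqrt : √a ≤ √b := sqrt_le_sqrt hab
  rw [le_div_iff₀ (by positivity)]
  calc (√b - √a) * (2 * √a) ≤ (√b - √a) * (√b + √a) := by gcongr; linarith
    _ = b - a := by linear_combination sq_sqrt (ha.le.trans hab) - sq_sqrt ha.le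

lemma abs_sqrt_sub_sqrt_sqrt_sq_add_le {a c : ℝ} (ha : 0 < a) (hc : 0 ≤ c) :
    |√a - √(√(a ^ 2 + c))| ≤ c / (4 * a * √a) := by
  have ha_le : a ≤ √(a ^ 2 + c) := le_sqrt_of_sq_le (by linarith)
  have hgap : √(a ^ 2 + c) - a ≤ c / (2 * a) := by
    simpa [sqrt_sq ha.le] using sqrt_sub_sqrt_le_div (pow_pos ha 2) (le_add_of_nonneg_right hc)
  rw [abs_sub_comm, abs_of_nonneg (sub_nonneg.2 (sqrt_le_sqrt ha_le))]
  calc √(√(a ^ 2 + c)) - √a ≤ (√(a ^ 2 + c) - a) / (2 * √a) := sqrt_sub_sqrt_le_div ha ha_le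
    _ ≤ c / (2 * a) / (2 * √a) := by gcongr
    _ = c / (4 * a * √a) := by field_simp; ring

lemma xi_sqrt_mul_add_half {x : ℝ} (hx : 0 ≤ x) :
    xi √(x * (x + 1 / 2)) = √(x ^ 2 + x / 2 + 1 / 16) := by
  rw [xi, sq_sqrt (by positivity)]
  ring_nf

lemma xi_mul_xi_add_half (x : ℝ) :
    xi x * xi (x + 1 / 2) = √((x ^ 2 + x / 2 + 1 / 16) ^ 2 + 1 / 64) := by
  rw [xi, xi, ← sqrt_mul (by positivity)]
  ring_nf

theorem xi_factorization_isBigO :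
    Asymptotics.IsBigO Filter.atTop
      (fun x : ℝ => xi (Real.sqrt (x * (x + 1/2))) - Real.sqrt (xi x * xi (x + 1/2)))
      (fun x : ℝ => 1 / x ^ 3) := by
  refine IsBigO.of_bound (1 / 256) ?_
  filter_upwards [eventually_gt_atTop 0] with x hx
  set A := x ^ 2 + x / 2 + 1 / 16
  have hx_sq : x ^ 2 ≤ A := by simp only [A]; linarith
  have hx_sqrt : x ≤ √A := le_sqrt_of_sq_le hx_sq
  calc ‖xi √(x * (x + 1 / 2)) - √(xi x * xi (x + 1 / 2))‖ = |√A - √(√(A ^ 2 + 1 / 64))| := by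
        rw [norm_eq_abs, xi_sqrt_mul_add_half hx.le, xi_mul_xi_add_half]
    _ ≤ 1 / 64 / (4 * A * √A) :=
        abs_sqrt_sub_sqrt_sqrt_sq_add_le (by positivity) (by norm_num)
    _ ≤ 1 / 64 / (4 * x ^ 2 * x) := by gcongr
    _ = 1 / 256 * ‖1 / x ^ 3‖ := by
        rw [norm_of_nonneg (by positivity)]
        ring
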